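/- Let H be an N×N Hermitian complex matrix, x ∈ ℂ^N, and a ∈ ℝ. For i ∈ {1,…,N}, define g(i) = (Hx)_i · e_i and x'(i) = x − a·g(i). Let ψ ∈ ℂ^N be a unit vector with Hψ = λψ (λ ∈ ℝ). Then (1/N) · Σ_{i=1}^N |⟨ψ, x'(i)⟩|² = (1 − 2aλ/N) · |⟨ψ, x⟩|² + (a²/N) · Σ_{i=1}^N |ψ_i|² · |(Hx)_i|². -/

import Mathlib

open scoped InnerProductSpace ComplexConjugate

/-- `A.mulVec` viewed as acting on `EuclideanSpace`. -/
noncomputable def mulVecE {N : ℕ} (A : Matrix (Fin N) (Fin N) ℂ)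
    (v : EuclideanSpace ℂ (Fin N)) : EuclideanSpace ℂ (Fin N) :=
  WithLp.toLp 2 (A.mulVec v)

/-!
Since `⟪ψ, x'(i)⟫ = ⟪ψ, x⟫ - a (Hx)_i conj ψ_i`, expanding the square leaves the cross term
`∑_i (Hx)_i conj ψ_i = ⟪ψ, Hx⟫ = ⟪Hψ, x⟫ = λ ⟪ψ, x⟫`, using that `H` is self-adjoint and `λ` is real.
-/

theorem LinearMap.IsSymmetric.inner_apply_eq_of_apply_eq_smul {𝕜 E : Type*} [RCLike 𝕜]
    [NormedAddCommGroup E] [InnerProductSpace 𝕜 E] {T : E →ₗ[𝕜] E} (hT : T.IsSymmetric)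
    {ψ : E} {lam : ℝ} (hψ : T ψ = (lam : 𝕜) • ψ) (x : E) :
    ⟪ψ, T x⟫_𝕜 = lam * ⟪ψ, x⟫_𝕜 := by
  rw [← hT, hψ, inner_smul_left, RCLike.conj_ofReal]

theorem sum_norm_sub_ofReal_mul_sq_of_sum_eq {ι : Type*} [Fintype ι] (c : ℂ) (t : ι → ℂ)
    (a lam : ℝ) (hsum : ∑ i, t i = lam * c) :
    ∑ i, ‖c - a * t i‖ ^ 2
      = (Fintype.card ι - 2 * a * lam) * ‖c‖ ^ 2 + a ^ 2 * ∑ i, ‖t i‖ ^ 2 := by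
  have hexpand (i : ι) :
      ‖c - a * t i‖ ^ 2 = ‖c‖ ^ 2 - 2 * a * (t i * conj c).re + a ^ 2 * ‖t i‖ ^ 2 := by
    rw [norm_sub_sq (𝕜 := ℂ), RCLike.inner_apply, RCLike.re_to_complex, mul_assoc,
      Complex.re_ofReal_mul, norm_mul, Complex.norm_real, Real.norm_eq_abs, mul_pow, sq_abs]
    ring
  have hcross : ((∑ i, t i) * conj c).re = lam * ‖c‖ ^ 2 := by
    rw [hsum, mul_assoc, Complex.mul_conj', ← Complex.ofReal_pow, ← Complex.ofReal_mul,
      Complex.ofReal_re]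
  simp only [hexpand, Finset.sum_add_distrib, Finset.sum_sub_distrib, ← Finset.sum_mul,
    Finset.sum_const, Finset.card_univ, nsmul_eq_mul, ← Complex.re_sum, ← Finset.mul_sum, hcross]
  ring

theorem stmt_7_general (N : ℕ) (hN : 1 ≤ N)
    (H : Matrix (Fin N) (Fin N) ℂ) (hH : H.IsHermitian)
    (x ψ : EuclideanSpace ℂ (Fin N)) (a lam : ℝ)
    (heig : mulVecE H ψ = (lam : ℂ) • ψ) :
    (1 / (N : ℝ)) * ∑ i : Fin N,
        ‖⟪ψ, x - (a : ℂ) • (mulVecE H x i • (EuclideanSpace.single i (1 : ℂ)))⟫_ℂ‖ ^ 2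
      = (1 - 2 * a * lam / (N : ℝ)) * ‖⟪ψ, x⟫_ℂ‖ ^ 2
        + (a ^ 2 / (N : ℝ)) * ∑ i : Fin N, ‖ψ i‖ ^ 2 * ‖mulVecE H x i‖ ^ 2 := by
  have hN0 : (N : ℝ) ≠ 0 := by positivity
  have hcoord (i : Fin N) :
      ⟪ψ, x - (a : ℂ) • (mulVecE H x i • (EuclideanSpace.single i (1 : ℂ)))⟫_ℂ
        = ⟪ψ, x⟫_ℂ - a * (mulVecE H x i * conj (ψ i)) := by
    rw [inner_sub_right, inner_smul_right, inner_smul_right, EuclideanSpace.inner_single_right,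
      one_mul]
  have hsum : ∑ i, mulVecE H x i * conj (ψ i) = lam * ⟪ψ, x⟫_ℂ := by
    refine Eq.trans ?_
      ((Matrix.isSymmetric_toEuclideanLin_iff.mpr hH).inner_apply_eq_of_apply_eq_smul heig x)
    simp [PiLp.inner_apply, mulVecE]
  simp_rw [hcoord, sum_norm_sub_ofReal_mul_sq_of_sum_eq _ _ a lam hsum, norm_mul,
    Complex.norm_conj, mul_pow, Fintype.card_fin, mul_comm (‖ψ _‖ ^ 2)]
  field_simp

/-- The expectation over a uniformly sampled coordinate `i` of
`|⟨ψ, x − a (Hx)_i e_i⟩|²` equals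
`(1 − 2aλ/N)·|⟨ψ, x⟩|² + (a²/N)·Σ_i |ψ_i|²·|(Hx)_i|²` for a unit eigenvector `ψ` of the
Hermitian matrix `H` with eigenvalue `λ`. -/
theorem stmt_7 (N : ℕ) (hN : 1 ≤ N)
    (H : Matrix (Fin N) (Fin N) ℂ) (hH : H.IsHermitian)
    (x ψ : EuclideanSpace ℂ (Fin N)) (a lam : ℝ)
    (hψ : ‖ψ‖ = 1) (heig : mulVecE H ψ = (lam : ℂ) • ψ) :
    (1 / (N : ℝ)) * ∑ i : Fin N,
        ‖⟪ψ, x - (a : ℂ) • (mulVecE H x i • (EuclideanSpace.single i (1 : ℂ)))⟫_ℂ‖ ^ 2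
      = (1 - 2 * a * lam / (N : ℝ)) * ‖⟪ψ, x⟫_ℂ‖ ^ 2
        + (a ^ 2 / (N : ℝ)) * ∑ i : Fin N, ‖ψ i‖ ^ 2 * ‖mulVecE H x i‖ ^ 2 :=
  stmt_7_general N hN H hH x ψ a lam heig
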